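/- Let 𝒜 be a closed set of games and 𝒦 ⊆ 𝒜 an evil kernel, such that the pair (𝒜, 𝒦) is evilly normal (for all A, B ∈ 𝒜, A + B ∉ 𝒦 iff A ∉ 𝒦 and B ∉ 𝒦). If G, H ∈ 𝒜 are equal in normal play (G = H) and are both in 𝒦, or both in 𝒜 \ 𝒦, then G and H are equivalent modulo 𝒜 in misère play: for every X ∈ 𝒜, o⁻(G + X) = o⁻(H + X). -/

import Mathlib

/-! Combinatorial game theory (`SetTheory.PGame`, `nim`, `star`, `Nimber`) has been removed
from Mathlib; the notions the statement uses are redefined here with their old meaning. -/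

universe v

namespace SetTheory

/-- Pre-games (as in the former `Mathlib.SetTheory.Game.PGame`). -/
inductive PGame : Type (v + 1)
  | mk : ∀ α β : Type v, (α → PGame) → (β → PGame) → PGame

namespace PGame

/-- The indexing type for allowable moves by Left. -/
def LeftMoves : PGame.{v} → Type v
  | mk l _ _ _ => l

/-- The indexing type for allowable moves by Right. -/
def RightMoves : PGame.{v} → Type v
  | mk _ r _ _ => r

/-- The new game after Left makes an allowed move. -/
def moveLeft : ∀ g : PGame.{v}, LeftMoves g → PGame.{v}
  | mk _l _ L _ => L

/-- The new game after Right makes an allowed move. -/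
def moveRight : ∀ g : PGame.{v}, RightMoves g → PGame.{v}
  | mk _ _r _ R => R

/-- `IsOption x y` means that `x` is either a left or right option for `y`. -/
inductive IsOption : PGame.{v} → PGame.{v} → Prop
  | moveLeft {x : PGame.{v}} (i : x.LeftMoves) : IsOption (x.moveLeft i) x
  | moveRight {x : PGame.{v}} (i : x.RightMoves) : IsOption (x.moveRight i) x

theorem wf_isOption : WellFounded IsOption.{v} :=
  ⟨fun x => by
    induction x with
    | mk l r L R ihL ihR =>
      refine Acc.intro _ fun y h => ?_
      cases h with
      | moveLeft i => exact ihL i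
      | moveRight j => exact ihR j⟩

/-- `Subsequent x y` says that `x` can be obtained by playing some nonempty sequence of moves
from `y`: the transitive closure of `IsOption`. -/
def Subsequent : PGame.{v} → PGame.{v} → Prop :=
  Relation.TransGen IsOption

theorem wf_subsequent : WellFounded Subsequent.{v} :=
  wf_isOption.transGen

instance : WellFoundedRelation PGame.{v} :=
  ⟨Subsequent, wf_subsequent⟩

theorem Subsequent.moveLeft' (x : PGame.{v}) (i : x.LeftMoves) : Subsequent (x.moveLeft i) x :=
  Relation.TransGen.single (IsOption.moveLeft i)

theorem Subsequent.moveRight' (x : PGame.{v}) (j : x.RightMoves) :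
    Subsequent (x.moveRight j) x :=
  Relation.TransGen.single (IsOption.moveRight j)

/-- The pair (`x ≤ y`, `x ⧏ y`) defined by simultaneous recursion:
`x ≤ y` iff no left option of `x` is `≥ y` and no right option of `y` is `≤ x`. -/
noncomputable def leLf : PGame.{v} → PGame.{v} → Prop × Prop :=
  fun x => PGame.rec (motive := fun _ => PGame.{v} → Prop × Prop)
    (fun _ xr xL xR IHxL IHxR y =>
      PGame.rec (motive := fun _ => Prop × Prop)
        (fun _ _ yL yR IHyL IHyR =>
          ((∀ i, (IHxL i (PGame.mk _ _ yL yR)).2) ∧ ∀ j, (IHyR j).2,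
            (∃ i, (IHyL i).1) ∨ ∃ j : xr, (IHxR j (PGame.mk _ _ yL yR)).1))
        y)
    x

/-- The less or equal relation on pre-games. -/
instance : LE PGame.{v} :=
  ⟨fun x y => (leLf x y).1⟩

/-- The strict order on pre-games (as in the former `Preorder PGame`): `x ≤ y ∧ ¬ y ≤ x`. -/
instance : LT PGame.{v} :=
  ⟨fun x y => x ≤ y ∧ ¬ y ≤ x⟩

/-- The pre-game `Zero` is defined by `0 = { | }`. -/
instance : Zero PGame.{v} :=
  ⟨⟨PEmpty, PEmpty, PEmpty.elim, PEmpty.elim⟩⟩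

/-- The negation of `{L | R}` is `{-R | -L}`. -/
def neg : PGame.{v} → PGame.{v}
  | ⟨l, r, L, R⟩ => ⟨r, l, fun i => neg (R i), fun i => neg (L i)⟩

instance : Neg PGame.{v} :=
  ⟨neg⟩

/-- The sum of `x = {xL | xR}` and `y = {yL | yR}` is `{xL + y, x + yL | xR + y, x + yR}`. -/
def addAux (xl xr : Type v) (fL : xl → PGame.{v} → PGame.{v}) (fR : xr → PGame.{v} → PGame.{v}) :
    PGame.{v} → PGame.{v}
  | mk yl yr yL yR =>
    mk (xl ⊕ yl) (xr ⊕ yr)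
      (Sum.elim (fun i => fL i (mk yl yr yL yR)) (fun j => addAux xl xr fL fR (yL j)))
      (Sum.elim (fun i => fR i (mk yl yr yL yR)) (fun j => addAux xl xr fL fR (yR j)))

/-- Disjunctive sum, by structural recursion on `x` and then on `y`. -/
def add : PGame.{v} → PGame.{v} → PGame.{v}
  | mk xl xr xL xR => addAux xl xr (fun i => add (xL i)) (fun i => add (xR i))

instance : Add PGame.{v} :=
  ⟨add⟩

/-- The pre-game subtraction `x - y = x + -y`. -/
instance : Sub PGame.{v} :=
  ⟨fun x y => x + -y⟩

/-- The pre-game `star`, which is fuzzy with zero. -/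
def star : PGame.{v} :=
  ⟨PUnit, PUnit, fun _ => 0, fun _ => 0⟩

/-- The definition of single-heap nim `nim o`: the game whose options are `nim o'` for `o' < o`. -/
noncomputable def nim (o : Ordinal.{v}) : PGame.{v} :=
  ⟨o.ToType, o.ToType,
    fun x => nim (Ordinal.ToType.toOrd x).1,
    fun x => nim (Ordinal.ToType.toOrd x).1⟩
termination_by o
decreasing_by all_goals exact (Ordinal.ToType.toOrd x).2

end PGame

end SetTheory

/-- The type of nimbers: a type synonym for the ordinals, with the same order. -/
def Nimber : Type (v + 1) := Ordinal.{v}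

noncomputable instance : ConditionallyCompleteLinearOrderBot Nimber.{v} :=
  inferInstanceAs (ConditionallyCompleteLinearOrderBot Ordinal.{v})

/-- The nimber `1`, i.e. the ordinal `1`. -/
instance : One Nimber.{v} :=
  ⟨(1 : Ordinal.{v})⟩

open SetTheory PGame

universe u

/-- The four outcome classes of a combinatorial game. -/
inductive Outcome : Type
  | L | N | P | R
deriving DecidableEq

/-- The partial order on outcomes: `R` least, `L` greatest, `N` and `P` incomparable. -/
def Outcome.leB : Outcome → Outcome → Bool
  | .R, _ => true
  | _, .L => true
  | .N, .N => true
  | .P, .P => true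
  | _, _ => false

instance : PartialOrder Outcome where
  le a b := Outcome.leB a b = true
  le_refl a := by cases a <;> rfl
  le_trans a b c := by cases a <;> cases b <;> cases c <;> simp [Outcome.leB]
  le_antisymm a b := by cases a <;> cases b <;> simp [Outcome.leB]

/-- `misereWins true G` : Left, moving first, wins `G` under misère play;
`misereWins false G` : Right, moving first, wins `G` under misère play.
(Under misère play, a player who cannot move wins.) -/
def misereWins : Bool → SetTheory.PGame.{u} → Prop
  | true, G => IsEmpty G.LeftMoves ∨ ∃ i, ¬ misereWins false (G.moveLeft i)
  | false, G => IsEmpty G.RightMoves ∨ ∃ j, ¬ misereWins true (G.moveRight j)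
termination_by _ G => G
decreasing_by all_goals first
  | exact Subsequent.moveLeft' _ _
  | exact Subsequent.moveRight' _ _

/-- Build an outcome class from the propositions "Left moving first wins" and
"Right moving first wins". -/
noncomputable def outcomeOf (LF RF : Prop) : Outcome := by
  classical exact if LF then (if RF then .N else .L) else (if RF then .R else .P)

/-- The normal-play outcome `o⁺(G)` of a game. -/
noncomputable def normalOutcome (G : PGame) : Outcome :=
  outcomeOf (¬ G ≤ 0) (¬ 0 ≤ G)

/-- The misère-play outcome `o⁻(G)` of a game. -/
noncomputable def misereOutcome (G : PGame) : Outcome :=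
  outcomeOf (misereWins true G) (misereWins false G)

/-- The ordinal sum `G : H` of two games: either move in `G` (destroying the `H` part),
or move in `H` keeping the base `G`. -/
def ordinalSum (G : PGame.{u}) : PGame.{u} → PGame.{u}
  | H => PGame.mk (G.LeftMoves ⊕ H.LeftMoves) (G.RightMoves ⊕ H.RightMoves)
      (Sum.elim G.moveLeft fun i => ordinalSum G (H.moveLeft i))
      (Sum.elim G.moveRight fun j => ordinalSum G (H.moveRight j))
termination_by H => H
decreasing_by all_goals first
  | exact Subsequent.moveLeft' _ _
  | exact Subsequent.moveRight' _ _

/-- The game `↑` (up) `= {0 | *}`. -/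
def up : PGame.{u} := ⟨PUnit, PUnit, fun _ => 0, fun _ => star⟩

/-- `n` copies of `↑` added together. -/
def nUp : ℕ → PGame.{u}
  | 0 => 0
  | n + 1 => nUp n + up

/-- The integer multiple `w·↑`. -/
def upMul : ℤ → PGame.{u}
  | .ofNat k => nUp k
  | .negSucc k => -(nUp (k + 1))

/-- Finite disjunctive sum of a family of games. -/
def psum : {k : ℕ} → (Fin k → PGame.{u}) → PGame.{u}
  | 0, _ => 0
  | k + 1, f => psum (fun i : Fin k => f i.castSucc) + f (Fin.last k)

/-- The superstar `{*x₁, …, *xₙ}`: the impartial game whose Left and Right options are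
exactly the nimbers `*xᵢ`. -/
noncomputable def superstar {n : ℕ} (x : Fin n → ℕ) : PGame :=
  ⟨Fin n, Fin n, fun i => nim (x i), fun i => nim (x i)⟩

/-- The minimum excludant of a set of naturals. -/
noncomputable def setMex (S : Set ℕ) : ℕ := sInf {n | n ∉ S}

/-- Iterated XOR (nim-sum) of a finite family of naturals. -/
def xorSum : {k : ℕ} → (Fin k → ℕ) → ℕ
  | 0, _ => 0
  | k + 1, f => xorSum (fun i : Fin k => f i.castSucc) ^^^ f (Fin.last k)

/-- A set of naturals is star-closed if it is closed under XOR with 1. -/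
def StarClosedN (S : Set ℕ) : Prop := ∀ a ∈ S, a ^^^ 1 ∈ S

/-- `G` is all-small (dicotic): in every subposition, either both players can move
or neither can. -/
def AllSmall (G : PGame) : Prop :=
  (Nonempty G.LeftMoves ↔ Nonempty G.RightMoves) ∧
    ∀ p, Subsequent p G → (Nonempty p.LeftMoves ↔ Nonempty p.RightMoves)

/-- `G` has (integer) atomic weight `w`, via the remote-star characterization:
for all sufficiently remote `N`, `*N + ↓ < G - w·↑ < *N + ↑`. -/
def HasIntAtomicWeight (G : PGame) (w : ℤ) : Prop :=
  ∃ N₀ : ℕ, ∀ N : ℕ, N₀ ≤ N →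
    nim N + (-up) < G - upMul w ∧ G - upMul w < nim N + up

open Classical in
/-- The misère Grundy value of an (impartial) game: the mex of the misère Grundy values
of its options, except that the empty game has misère Grundy value `1`. -/
noncomputable def misereGrundy : PGame.{u} → Nimber.{u}
  | G =>
    if IsEmpty G.LeftMoves then 1
    else sInf (Set.range fun i => misereGrundy (G.moveLeft i))ᶜ
termination_by G => G
decreasing_by all_goals first
  | exact Subsequent.moveLeft' _ _
  | exact Subsequent.moveRight' _ _

/-- A set of games closed under disjunctive sum and under taking subpositions. -/
def SClosed (A : Set PGame) : Prop :=
  (∀ G ∈ A, ∀ H ∈ A, G + H ∈ A) ∧ ∀ G ∈ A, ∀ G', Subsequent G' G → G' ∈ A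

/-- `K` is an evil kernel of `A`: setting `G* = G` for `G ∈ K` and `G* = G + *` otherwise,
one has `o⁺(G) = o⁻(G*)` and `o⁻(G) = o⁺(G*)` for all `G ∈ A`. -/
def IsEvilKernel (A K : Set PGame) : Prop :=
  K ⊆ A ∧ ∀ G ∈ A,
    (G ∈ K → normalOutcome G = misereOutcome G ∧ misereOutcome G = normalOutcome G) ∧
    (G ∉ K → normalOutcome G = misereOutcome (G + star) ∧
      misereOutcome G = normalOutcome (G + star))

/-- `(A, K)` is evilly normal: `A` is closed, `K` is an evil kernel of `A`, and
`G + H ∉ K ↔ (G ∉ K ∧ H ∉ K)` for all `G, H ∈ A`. -/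
def EvillyNormal (A K : Set PGame) : Prop :=
  SClosed A ∧ IsEvilKernel A K ∧ ∀ G ∈ A, ∀ H ∈ A, (G + H ∉ K ↔ G ∉ K ∧ H ∉ K)

/-- Normal-play equality of games: `G` and `H` have the same normal-play outcome in
every sum. -/
def NormalEq (G H : PGame) : Prop := ∀ X, normalOutcome (G + X) = normalOutcome (H + X)

def pLf (x y : PGame.{u}) : Prop := (leLf x y).2

theorem pLe_def (x y : PGame.{u}) :
    x ≤ y ↔ (∀ i, pLf (x.moveLeft i) y) ∧ ∀ j, pLf x (y.moveRight j) := by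
  cases x; cases y; exact Iff.rfl

theorem pLf_def (x y : PGame.{u}) :
    pLf x y ↔ (∃ i, x ≤ y.moveLeft i) ∨ ∃ j, x.moveRight j ≤ y := by
  cases x; cases y; exact Iff.rfl

inductive PRel : PGame.{u} → PGame.{u} → Prop
  | mk (x y : PGame.{u}) (eL : x.LeftMoves ≃ y.LeftMoves) (eR : x.RightMoves ≃ y.RightMoves)
      (hL : ∀ i, PRel (x.moveLeft i) (y.moveLeft (eL i)))
      (hR : ∀ j, PRel (x.moveRight j) (y.moveRight (eR j))) : PRel x y

theorem PRel.inv {x y : PGame.{u}} (h : PRel x y) :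
    ∃ (eL : x.LeftMoves ≃ y.LeftMoves) (eR : x.RightMoves ≃ y.RightMoves),
      (∀ i, PRel (x.moveLeft i) (y.moveLeft (eL i))) ∧
      ∀ j, PRel (x.moveRight j) (y.moveRight (eR j)) := by
  cases h with
  | mk _ _ eL eR hL hR => exact ⟨eL, eR, hL, hR⟩

theorem PRel.refl' (x : PGame.{u}) : PRel x x := by
  induction x with
  | mk xl xr xL xR ihL ihR =>
    exact PRel.mk _ _ (Equiv.refl _) (Equiv.refl _) ihL ihR

theorem pRel_transfer (x : PGame.{u}) : ∀ (y x' y' : PGame.{u}), PRel x x' → PRel y y' →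
    ((x ≤ y ↔ x' ≤ y') ∧ (pLf x y ↔ pLf x' y')) := by
  induction x with
  | mk xl xr xL xR ihxL ihxR =>
  intro y
  induction y with
  | mk yl yr yL yR ihyL ihyR =>
  intro x' y' hx hy
  obtain ⟨eL, eR, hL, hR⟩ := hx.inv
  obtain ⟨fL, fR, gL, gR⟩ := hy.inv
  rw [pLe_def, pLe_def, pLf_def, pLf_def]
  refine ⟨⟨?_, ?_⟩, ⟨?_, ?_⟩⟩
  · rintro ⟨h1, h2⟩
    refine ⟨fun i => ?_, fun j => ?_⟩
    · have := (ihxL (eL.symm i) _ _ _ (hL (eL.symm i)) hy).2.1 (h1 _)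
      rw [Equiv.apply_symm_apply] at this
      exact this
    · have := (ihyR (fR.symm j) _ _ hx (gR (fR.symm j))).2.1 (h2 _)
      rw [Equiv.apply_symm_apply] at this
      exact this
  · rintro ⟨h1, h2⟩
    refine ⟨fun i => ?_, fun j => ?_⟩
    · exact (ihxL i _ _ _ (hL i) hy).2.2 (h1 _)
    · exact (ihyR j _ _ hx (gR j)).2.2 (h2 _)
  · rintro (⟨i, h⟩ | ⟨j, h⟩)
    · exact Or.inl ⟨fL i, (ihyL i _ _ hx (gL i)).1.1 h⟩
    · exact Or.inr ⟨eR j, (ihxR j _ _ _ (hR j) hy).1.1 h⟩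
  · rintro (⟨i, h⟩ | ⟨j, h⟩)
    · have := (ihyL (fL.symm i) _ _ hx (gL (fL.symm i))).1.2
      rw [Equiv.apply_symm_apply] at this
      exact Or.inl ⟨_, this h⟩
    · have := (ihxR (eR.symm j) _ _ _ (hR (eR.symm j)) hy).1.2
      rw [Equiv.apply_symm_apply] at this
      exact Or.inr ⟨_, this h⟩

theorem add_assoc_prel (a b c : PGame.{u}) : PRel ((a + b) + c) (a + (b + c)) := by
  induction a generalizing b c with
  | mk al ar aL aR ihaL ihaR =>
  induction b generalizing c with
  | mk bl br bL bR ihbL ihbR =>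
  induction c with
  | mk cl cr cL cR ihcL ihcR =>
  refine PRel.mk _ _ (Equiv.sumAssoc _ _ _) (Equiv.sumAssoc _ _ _) ?_ ?_
  · rintro ((i | j) | k)
    · exact ihaL i _ _
    · exact ihbL j _
    · exact ihcL k
  · rintro ((i | j) | k)
    · exact ihaR i _ _
    · exact ihbR j _
    · exact ihcR k

theorem normalOutcome_congr' {G H : PGame} (h : PRel G H) :
    normalOutcome G = normalOutcome H := by
  have h1 : G ≤ 0 ↔ H ≤ 0 := (pRel_transfer G 0 H 0 h (PRel.refl' 0)).1
  have h2 : (0 : PGame) ≤ G ↔ 0 ≤ H := (pRel_transfer 0 G 0 H (PRel.refl' 0) h).1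
  simp only [normalOutcome, h1, h2]

/-- if `(A, K)` is evilly normal and `G, H ∈ A` are equal in normal play
and both in `K`, or both in `A \ K`, then `G` and `H` are misère-equivalent modulo `A`. -/
theorem evillyNormal_congr (A K : Set PGame) (h : EvillyNormal A K)
    (G H : PGame) (hG : G ∈ A) (hH : H ∈ A) (heq : NormalEq G H)
    (hk : (G ∈ K ∧ H ∈ K) ∨ (G ∉ K ∧ H ∉ K)) :
    ∀ X ∈ A, misereOutcome (G + X) = misereOutcome (H + X) := by
  intro X hX
  obtain ⟨⟨hsum, _⟩, ⟨hKA, hker⟩, hnorm⟩ := h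
  have hGX : G + X ∈ A := hsum G hG X hX
  have hHX : H + X ∈ A := hsum H hH X hX
  have hmem : G + X ∈ K ↔ H + X ∈ K := by
    have h1 := hnorm G hG X hX
    have h2 := hnorm H hH X hX
    have hnn : (G + X ∉ K) ↔ (H + X ∉ K) := by
      rw [h1, h2]
      rcases hk with ⟨hGK, hHK⟩ | ⟨hGK, hHK⟩ <;> tauto
    exact not_iff_not.mp hnn
  by_cases hGXK : G + X ∈ K
  · have hHXK : H + X ∈ K := hmem.mp hGXK
    have e1 := ((hker (G + X) hGX).1 hGXK).1
    have e2 := ((hker (H + X) hHX).1 hHXK).1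
    rw [← e1, ← e2]
    exact heq X
  · have hHXK : H + X ∉ K := fun hc => hGXK (hmem.mpr hc)
    have e1 := ((hker (G + X) hGX).2 hGXK).2
    have e2 := ((hker (H + X) hHX).2 hHXK).2
    rw [e1, e2]
    rw [normalOutcome_congr' (add_assoc_prel G X star),
        normalOutcome_congr' (add_assoc_prel H X star)]
    exact heq (X + star)
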